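/- For arbitrarily large n there exists a binary tree T on n vertices such that bfsw(T)/bfsw_min(T) ≥ (log₂(n/3) + 2)/2; in particular the ratio bfsw(T)/bfsw_min(T) is Ω(log n). -/

import Mathlib

open SimpleGraph

/-- Number of vertices at distance exactly `i` from `v`. -/
noncomputable def layerCard {V : Type*} (G : SimpleGraph V) (v : V) (i : ℕ) : ℕ :=
  ({u : V | G.dist v u = i}).ncard

/-- BFS width of `G` from root `v`: the maximum layer size. -/
noncomputable def bfswFrom {V : Type*} (G : SimpleGraph V) (v : V) : ℕ :=
  sSup (Set.range (layerCard G v))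

/-- BFS width of `G`: maximum over roots. -/
noncomputable def bfsw {V : Type*} (G : SimpleGraph V) : ℕ :=
  sSup (Set.range (bfswFrom G))

/-- Minimum BFS width of `G`: minimum over roots. -/
noncomputable def bfswMin {V : Type*} (G : SimpleGraph V) : ℕ :=
  sInf (Set.range (bfswFrom G))

/-- Bandwidth of `G`: least `b` such that some linear layout has all edges of length `≤ b`. -/
noncomputable def bw {V : Type*} [Fintype V] (G : SimpleGraph V) : ℕ :=
  sInf { b : ℕ | ∃ f : V ≃ Fin (Fintype.card V),
    ∀ u w : V, G.Adj u w → ((f u : ℤ) - (f w : ℤ)).natAbs ≤ b }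

/-!
Take the level-2 tree with spine `0 — 1 — ⋯ — 2^j` and, for each `i ≤ j`, a pendant path on
`2^i` vertices hanging off spine vertex `2^j - 2^i`; it has `n = 3 · 2^j` vertices and maximum
degree 3. Seen from the spine end `0`, the other spine end and the `j + 1` pendant leaves all lie at
distance `2^j`, so `bfsw ≥ j + 2`. Seen from the spine end `2^j`, every distance class contains at
most one spine vertex and at most one pendant vertex, because pendant `i` starts at distance
`2^i + 1` exactly where pendant `i - 1` stops; hence `bfsw_min ≤ 2`. Both distance functions are
given in closed form and certified as potentials that change by one along every edge and can
always be decreased by one towards the root.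
-/

section BfsWidth

variable {V : Type*} (G : SimpleGraph V)

lemma layerCard_le_bfswFrom [Finite V] (v : V) (i : ℕ) : layerCard G v i ≤ bfswFrom G v :=
  le_csSup ⟨Nat.card V, by rintro _ ⟨k, rfl⟩; exact Set.ncard_le_card _⟩ ⟨i, rfl⟩

lemma bfswFrom_le_of_forall_layerCard_le {v : V} {b : ℕ} (h : ∀ i, layerCard G v i ≤ b) :
    bfswFrom G v ≤ b :=
  csSup_le (Set.range_nonempty _) (by rintro _ ⟨i, rfl⟩; exact h i)

lemma bfswFrom_le_bfsw [Finite V] (v : V) : bfswFrom G v ≤ bfsw G :=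
  le_csSup ⟨Nat.card V, by
    rintro _ ⟨u, rfl⟩
    exact bfswFrom_le_of_forall_layerCard_le G fun _ ↦ Set.ncard_le_card _⟩ ⟨v, rfl⟩

lemma bfswMin_le_bfswFrom (v : V) : bfswMin G ≤ bfswFrom G v :=
  Nat.sInf_le ⟨v, rfl⟩

lemma one_le_layerCard_zero [Finite V] (v : V) : 1 ≤ layerCard G v 0 :=
  (Set.ncard_pos (Set.toFinite _)).mpr ⟨v, dist_self⟩

lemma one_le_bfswMin [Finite V] [Nonempty V] : 1 ≤ bfswMin G :=
  le_csInf (Set.range_nonempty _) fun _ ⟨v, hv⟩ ↦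
    hv ▸ (one_le_layerCard_zero G v).trans (layerCard_le_bfswFrom G v 0)

end BfsWidth

section Descent

variable {V : Type*} {G : SimpleGraph V} {f : V → ℕ}

lemma SimpleGraph.Walk.apply_le_apply_add_length (hf : ∀ a b, G.Adj a b → f a ≤ f b + 1)
    {u v : V} (p : G.Walk u v) : f u ≤ f v + p.length := by
  induction p with
  | nil => simp
  | cons h _ ih =>
    have := hf _ _ h
    rw [Walk.length_cons]
    omega

lemma exists_walk_length_eq_of_descent {r : V} (hr : f r = 0)
    (hdesc : ∀ u, u ≠ r → ∃ w, G.Adj u w ∧ f w + 1 = f u) (u : V) :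
    ∃ p : G.Walk u r, p.length = f u := by
  induction hu : f u generalizing u with
  | zero =>
    by_cases hur : u = r
    · exact hur ▸ ⟨Walk.nil, rfl⟩
    · obtain ⟨w, -, hw⟩ := hdesc u hur
      omega
  | succ d ih =>
    have hur : u ≠ r := by rintro rfl; omega
    obtain ⟨w, hadj, hw⟩ := hdesc u hur
    obtain ⟨p, hp⟩ := ih w (by omega)
    exact ⟨Walk.cons hadj p, by rw [Walk.length_cons, hp]⟩

theorem dist_eq_of_descent {r : V} (hr : f r = 0) (hf : ∀ a b, G.Adj a b → f a ≤ f b + 1)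
    (hdesc : ∀ u, u ≠ r → ∃ w, G.Adj u w ∧ f w + 1 = f u) (u : V) : G.dist r u = f u := by
  obtain ⟨p, hp⟩ := exists_walk_length_eq_of_descent hr hdesc u
  obtain ⟨q, hq⟩ := (Reachable.symm ⟨p⟩ : G.Reachable r u).exists_walk_length_eq_dist
  apply le_antisymm
  · simpa [hp] using dist_le p.reverse
  · have := q.reverse.apply_le_apply_add_length hf
    rw [Walk.length_reverse, hr] at this
    omega

lemma connected_of_descent [Nonempty V] {r : V} (hr : f r = 0)
    (hdesc : ∀ u, u ≠ r → ∃ w, G.Adj u w ∧ f w + 1 = f u) : G.Connected :=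
  connected_iff_exists_forall_reachable G |>.mpr
    ⟨r, fun u ↦ (exists_walk_length_eq_of_descent hr hdesc u).elim fun p _ ↦ p.reachable.symm⟩

end Descent

def parentGraph {n : ℕ} (p : ℕ → ℕ) : SimpleGraph (Fin n) :=
  SimpleGraph.fromRel fun a b ↦ p a = b

section ParentGraph

variable {n : ℕ} {p : ℕ → ℕ}

instance : DecidableRel (parentGraph p : SimpleGraph (Fin n)).Adj :=
  inferInstanceAs (DecidableRel (fromRel _).Adj)

lemma parentGraph_adj {a b : Fin n} :
    (parentGraph p).Adj a b ↔ a ≠ b ∧ (p a = b ∨ p b = a) :=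
  fromRel_adj _ a b

lemma parentGraph_isBridge (hp : ∀ k, p k ≤ k) {a b : Fin n} (hab : a ≠ b) (hpa : p a = b) :
    (parentGraph p).IsBridge s(a, b) := by
  refine isBridge_iff_forall_walk_mem_edges.mpr fun q ↦ ?_
  let S : Set (Fin n) := {x | ∃ t, p^[t] x = a}
  have hbS : b ∉ S := by
    rintro ⟨t, ht⟩
    have hba : (b : ℕ) < a := lt_of_le_of_ne (hpa ▸ hp a) (Fin.val_ne_of_ne hab.symm)
    have := Function.iterate_le_id_of_le_id hp t b
    simp only [id] at this
    omega
  obtain ⟨d, hd, ⟨t, ht⟩, hsnd⟩ := q.exists_boundary_dart S ⟨0, rfl⟩ hbS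
  rcases (parentGraph_adj.mp d.adj).2 with hfst | hsnd'
  · cases t with
    | zero =>
      have hfa : d.fst = a := Fin.ext ht
      have hsb : d.snd = b := Fin.ext (by rw [← hfst, ← hpa, hfa])
      rw [Walk.edges_eq_map_darts]
      convert List.mem_map_of_mem (f := Dart.edge) hd
      rw [Dart.edge, hfa, hsb]
    | succ t =>
      exact absurd ⟨t, by rw [← hfst, ← Function.iterate_succ_apply, ht]⟩ hsnd
  · exact absurd ⟨t + 1, by rw [Function.iterate_succ_apply, hsnd', ht]⟩ hsnd

lemma parentGraph_isAcyclic (hp : ∀ k, p k ≤ k) :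
    (parentGraph p : SimpleGraph (Fin n)).IsAcyclic := by
  refine isAcyclic_iff_forall_adj_isBridge.mpr fun a b hab ↦ ?_
  rcases (parentGraph_adj.mp hab).2 with h | h
  · exact parentGraph_isBridge hp (parentGraph_adj.mp hab).1 h
  · exact Sym2.eq_swap ▸ parentGraph_isBridge hp (parentGraph_adj.mp hab).1.symm h

lemma parentGraph_degree_le [DecidableRel (parentGraph p : SimpleGraph (Fin n)).Adj] (v : Fin n)
    (C : Finset ℕ) (hC : ∀ u : Fin n, p u = v → u ≠ v → (u : ℕ) ∈ C) :
    (parentGraph p).degree v ≤ C.card + 1 := by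
  have hsub : ((parentGraph p).neighborFinset v).map Fin.valEmbedding ⊆ insert (p v) C := by
    intro _ hx
    obtain ⟨u, hu, rfl⟩ := Finset.mem_map.mp hx
    obtain ⟨hvu, h | h⟩ := parentGraph_adj.mp ((mem_neighborFinset _ _ _).mp hu)
    · exact Finset.mem_insert.mpr (Or.inl h.symm)
    · exact Finset.mem_insert_of_mem (hC u h hvu.symm)
  calc (parentGraph p).degree v
      = (((parentGraph p).neighborFinset v).map Fin.valEmbedding).card := by
        rw [Finset.card_map, card_neighborFinset_eq_degree]
    _ ≤ (insert (p v) C).card := Finset.card_le_card hsub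
    _ ≤ C.card + 1 := Finset.card_insert_le _ _

variable {f : ℕ → ℕ}

lemma parentGraph_adj_le (hp : ∀ k, p k ≤ k)
    (hf : ∀ k, k ≠ 0 → k < n → f k ≤ f (p k) + 1 ∧ f (p k) ≤ f k + 1) (a b : Fin n)
    (hab : (parentGraph p).Adj a b) : f a ≤ f b + 1 := by
  obtain ⟨hne, h | h⟩ := parentGraph_adj.mp hab
  · have ha : (a : ℕ) ≠ 0 := fun h0 ↦ hne (Fin.ext (by have := hp a; omega))
    exact h ▸ (hf a ha a.isLt).1
  · have hb : (b : ℕ) ≠ 0 := fun h0 ↦ hne (Fin.ext (by have := hp b; omega))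
    exact h ▸ (hf b hb b.isLt).2

lemma parentGraph_exists_adj_descent (hp : ∀ k, p k ≤ k)
    (hf : ∀ k, k ≠ 0 → k < n → f (p k) + 1 = f k) (u : Fin n) (hu : (u : ℕ) ≠ 0) :
    ∃ w, (parentGraph p).Adj u w ∧ f w + 1 = f u := by
  have hfu := hf u hu u.isLt
  refine ⟨⟨p u, (hp u).trans_lt u.isLt⟩, parentGraph_adj.mpr ⟨fun h ↦ ?_, Or.inl rfl⟩, hfu⟩
  rw [show p u = u from (congrArg Fin.val h).symm] at hfu
  omega

lemma parentGraph_connected [NeZero n] (hp : ∀ k, p k ≤ k) (hf0 : f 0 = 0)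
    (hf : ∀ k, k ≠ 0 → k < n → f (p k) + 1 = f k) :
    (parentGraph p : SimpleGraph (Fin n)).Connected :=
  connected_of_descent (f := fun a : Fin n ↦ f a) (r := 0) hf0
    fun u hu ↦ parentGraph_exists_adj_descent hp hf u (Fin.val_ne_of_ne hu)

lemma parentGraph_dist_zero [NeZero n] (hp : ∀ k, p k ≤ k) (hf0 : f 0 = 0)
    (hf : ∀ k, k ≠ 0 → k < n → f (p k) + 1 = f k) (a : Fin n) :
    (parentGraph p).dist 0 a = f a :=
  dist_eq_of_descent (f := fun a : Fin n ↦ f a) hf0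
    (parentGraph_adj_le hp fun k hk hkn ↦ by have := hf k hk hkn; omega)
    (fun u hu ↦ parentGraph_exists_adj_descent hp hf u (Fin.val_ne_of_ne hu)) a

end ParentGraph

namespace LevelTwoTree

/-- Vertices `0, …, 2^j` form the spine; pendant `i ≤ j` occupies `2^j + 2^i, …, 2^j + 2^(i+1) - 1`
and hangs off spine vertex `2^j - 2^i` by its first vertex. -/
def parent (j k : ℕ) : ℕ :=
  if 2 ^ j < k ∧ k - 2 ^ j = 2 ^ Nat.log 2 (k - 2 ^ j) then 2 ^ (j + 1) - k else k - 1

def depth (j k : ℕ) : ℕ :=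
  if k ≤ 2 ^ j then k else k + 1 - 2 ^ (Nat.log 2 (k - 2 ^ j) + 1)

def tipDist (j k : ℕ) : ℕ :=
  if k ≤ 2 ^ j then 2 ^ j - k else k - 2 ^ j + 1

abbrev graph (j : ℕ) : SimpleGraph (Fin (3 * 2 ^ j)) :=
  parentGraph (parent j)

instance (j : ℕ) : NeZero (3 * 2 ^ j) :=
  ⟨by positivity⟩

def tip (j : ℕ) : Fin (3 * 2 ^ j) :=
  ⟨2 ^ j, by have := Nat.two_pow_pos j; omega⟩

variable {j k : ℕ}

lemma parent_le (j k : ℕ) : parent j k ≤ k := by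
  unfold parent
  split_ifs <;> omega

lemma parent_of_le (hk : k ≤ 2 ^ j) : parent j k = k - 1 :=
  if_neg fun h ↦ by omega

lemma pendant_bounds (hk : 2 ^ j < k) (hkn : k < 3 * 2 ^ j) :
    2 ^ Nat.log 2 (k - 2 ^ j) ≤ k - 2 ^ j ∧ k - 2 ^ j < 2 * 2 ^ Nat.log 2 (k - 2 ^ j) ∧
      2 ^ Nat.log 2 (k - 2 ^ j) ≤ 2 ^ j := by
  have hne : k - 2 ^ j ≠ 0 := by omega
  have hlt := Nat.lt_pow_succ_log_self one_lt_two (k - 2 ^ j)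
  rw [pow_succ'] at hlt
  refine ⟨Nat.pow_log_le_self 2 hne, hlt, Nat.pow_le_pow_right two_pos ?_⟩
  exact Nat.lt_succ_iff.mp (Nat.log_lt_of_lt_pow hne (by rw [pow_succ']; omega))

lemma depth_parent (hk0 : k ≠ 0) (hkn : k < 3 * 2 ^ j) : depth j (parent j k) + 1 = depth j k := by
  by_cases hk : k ≤ 2 ^ j
  · rw [parent_of_le hk, depth, depth, if_pos (by omega), if_pos hk]
    omega
  obtain ⟨hlo, hhi, hle⟩ := pendant_bounds (not_le.mp hk) hkn
  by_cases hpow : k - 2 ^ j = 2 ^ Nat.log 2 (k - 2 ^ j)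
  · rw [show parent j k = 2 ^ (j + 1) - k from if_pos ⟨not_le.mp hk, hpow⟩, depth, depth,
      if_pos (by rw [pow_succ]; omega), if_neg hk, pow_succ, pow_succ]
    omega
  · have hk1 : 2 ^ j < k - 1 := by
      have := Nat.one_le_two_pow (n := Nat.log 2 (k - 2 ^ j))
      omega
    have hlog : Nat.log 2 (k - 1 - 2 ^ j) = Nat.log 2 (k - 2 ^ j) :=
      Nat.log_eq_of_pow_le_of_lt_pow (by omega) (by rw [pow_succ']; omega)
    rw [show parent j k = k - 1 from if_neg fun h ↦ hpow h.2, depth, depth, if_neg (by omega),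
      if_neg hk, hlog, pow_succ]
    omega

lemma tipDist_parent_of_lt (hk : 2 ^ j < k) (hkn : k < 3 * 2 ^ j) :
    tipDist j (parent j k) + 1 = tipDist j k := by
  obtain ⟨hlo, hhi, hle⟩ := pendant_bounds hk hkn
  unfold tipDist parent
  split_ifs <;> omega

lemma mem_pair_of_parent_eq {u v : ℕ} (hu : u < 3 * 2 ^ j) (h : parent j u = v)
    (huv : u ≠ v) : u ∈ ({v + 1, 2 ^ (j + 1) - v} : Finset ℕ) := by
  rw [Finset.mem_insert, Finset.mem_singleton, pow_succ']
  unfold parent at h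
  split_ifs at h with hpend
  · have := pendant_bounds hpend.1 hu
    omega
  · omega

lemma depth_two_pow_add_two_pow_sub_one {i : ℕ} :
    depth j (2 ^ j + 2 ^ i - 1) = 2 ^ j := by
  cases i with
  | zero => simp [depth]
  | succ i =>
    have h2 : 2 ≤ 2 ^ (i + 1) := Nat.le_self_pow (Nat.succ_ne_zero i) 2
    have hlog : Nat.log 2 (2 ^ j + 2 ^ (i + 1) - 1 - 2 ^ j) = i :=
      Nat.log_eq_of_pow_le_of_lt_pow (by rw [pow_succ] at h2 ⊢; omega) (by omega)
    rw [depth, if_neg (by omega), hlog]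
    generalize 2 ^ j = M
    omega

lemma depth_zero : depth j 0 = 0 := by
  simp [depth]

lemma graph_isTree (j : ℕ) : (graph j).IsTree :=
  ⟨parentGraph_connected (parent_le j) depth_zero fun _ ↦ depth_parent,
    parentGraph_isAcyclic (parent_le j)⟩

lemma graph_maxDegree_le (j : ℕ) [DecidableRel (graph j).Adj] : (graph j).maxDegree ≤ 3 :=
  maxDegree_le_of_forall_degree_le _ _ fun v ↦
    (parentGraph_degree_le v _ fun u h huv ↦
      mem_pair_of_parent_eq u.isLt h (Fin.val_ne_of_ne huv)).trans
      (Nat.add_le_add_right Finset.card_le_two 1)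

lemma dist_zero (a : Fin (3 * 2 ^ j)) : (graph j).dist 0 a = depth j a :=
  parentGraph_dist_zero (parent_le j) depth_zero (fun _ ↦ depth_parent) a

lemma dist_tip (a : Fin (3 * 2 ^ j)) : (graph j).dist (tip j) a = tipDist j a := by
  refine dist_eq_of_descent (f := fun a : Fin (3 * 2 ^ j) ↦ tipDist j a) (by simp [tip, tipDist])
    (parentGraph_adj_le (parent_le j) fun k hk0 hkn ↦ ?_) (fun u hu ↦ ?_) a
  · by_cases hk : k ≤ 2 ^ j
    · rw [parent_of_le hk, tipDist, tipDist, if_pos hk, if_pos (by omega)]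
      omega
    · have := tipDist_parent_of_lt (not_le.mp hk) hkn
      omega
  · have hu' : (u : ℕ) ≠ 2 ^ j := fun h ↦ hu (Fin.ext h)
    by_cases hlt : (u : ℕ) < 2 ^ j
    · refine ⟨⟨u + 1, by omega⟩, parentGraph_adj.mpr ⟨fun h ↦ ?_, Or.inr ?_⟩, ?_⟩
      · exact (Nat.lt_succ_self u).ne (congrArg Fin.val h)
      · exact parent_of_le hlt
      · show tipDist j (u + 1) + 1 = tipDist j u
        rw [tipDist, tipDist, if_pos hlt.le, if_pos (by omega)]
        omega
    · have hgt : 2 ^ j < (u : ℕ) := by omega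
      have := tipDist_parent_of_lt hgt u.isLt
      refine ⟨⟨parent j u, (parent_le j u).trans_lt u.isLt⟩,
        parentGraph_adj.mpr ⟨fun h ↦ ?_, Or.inl rfl⟩, this⟩
      rw [show parent j u = u from (congrArg Fin.val h).symm] at this
      omega

lemma add_two_le_layerCard_zero : j + 2 ≤ layerCard (graph j) 0 (2 ^ j) := by
  set t := (Finset.range (j + 2)).image fun i ↦ 2 ^ j + 2 ^ i - 1
  have ht : t.card = j + 2 := by
    rw [Finset.card_image_of_injective _ fun a b h ↦ ?_, Finset.card_range]
    have h : 2 ^ j + 2 ^ a - 1 = 2 ^ j + 2 ^ b - 1 := h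
    exact Nat.pow_right_injective le_rfl
      (Nat.add_left_cancel (Nat.sub_one_cancel (by positivity) (by positivity) h))
  have hsub : (t : Set ℕ) ⊆ Fin.val '' {u | (graph j).dist 0 u = 2 ^ j} := by
    intro x hx
    obtain ⟨i, hi, rfl⟩ := Finset.mem_image.mp hx
    have hi' : 2 ^ i ≤ 2 * 2 ^ j :=
      pow_succ' 2 j ▸ Nat.pow_le_pow_right two_pos (Nat.lt_succ_iff.mp (Finset.mem_range.mp hi))
    have := Nat.two_pow_pos j
    exact ⟨⟨2 ^ j + 2 ^ i - 1, by omega⟩,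
      (dist_zero _).trans depth_two_pow_add_two_pow_sub_one, rfl⟩
  calc j + 2 = (t : Set ℕ).ncard := by rw [Set.ncard_coe_finset, ht]
    _ ≤ (Fin.val '' {u | (graph j).dist 0 u = 2 ^ j}).ncard := Set.ncard_le_ncard hsub
    _ = layerCard (graph j) 0 (2 ^ j) := Set.ncard_image_of_injective _ Fin.val_injective

lemma layerCard_tip_le_two (d : ℕ) : layerCard (graph j) (tip j) d ≤ 2 := by
  have hsub : Fin.val '' {u | (graph j).dist (tip j) u = d} ⊆ {2 ^ j - d, 2 ^ j + d - 1} := by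
    rintro _ ⟨u, hu, rfl⟩
    have hu : tipDist j u = d := (dist_tip u).symm.trans hu
    rw [tipDist] at hu
    rw [Set.mem_insert_iff, Set.mem_singleton_iff]
    split_ifs at hu <;> omega
  calc layerCard (graph j) (tip j) d
      = (Fin.val '' {u | (graph j).dist (tip j) u = d}).ncard :=
        (Set.ncard_image_of_injective _ Fin.val_injective).symm
    _ ≤ ({2 ^ j - d, 2 ^ j + d - 1} : Set ℕ).ncard := Set.ncard_le_ncard hsub
    _ ≤ 2 := (Set.ncard_insert_le _ _).trans (by rw [Set.ncard_singleton])

end LevelTwoTree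

open LevelTwoTree in
/-- For arbitrarily large $n$ there is a binary tree (maximum degree $≤ 3$) on $n$
vertices with bfsw$(T)/$bfsw_min$(T) ≥ (\log_2(n/3) + 2)/2 = Ω(\log n)$. -/
theorem exists_binary_tree_bfsw_ratio (N : ℕ) :
    ∃ (n : ℕ) (T : SimpleGraph (Fin n)) (_ : DecidableRel T.Adj),
      N ≤ n ∧ T.IsTree ∧ T.maxDegree ≤ 3 ∧
      ((Nat.log 2 (n / 3) : ℚ) + 2) / 2 ≤ (bfsw T : ℚ) / (bfswMin T : ℚ) := by
  refine ⟨3 * 2 ^ N, graph N, inferInstance, ?_, graph_isTree N, graph_maxDegree_le N, ?_⟩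
  · have := Nat.lt_two_pow_self (n := N)
    omega
  have hlog : Nat.log 2 (3 * 2 ^ N / 3) = N := by
    rw [Nat.mul_div_cancel_left _ three_pos, Nat.log_pow one_lt_two]
  have hwide : N + 2 ≤ bfsw (graph N) :=
    add_two_le_layerCard_zero.trans ((layerCard_le_bfswFrom _ _ _).trans (bfswFrom_le_bfsw _ _))
  have hnarrow : bfswMin (graph N) ≤ 2 :=
    (bfswMin_le_bfswFrom _ (tip N)).trans
      (bfswFrom_le_of_forall_layerCard_le _ layerCard_tip_le_two)
  have hpos : 0 < bfswMin (graph N) := one_le_bfswMin _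
  rw [hlog]
  exact div_le_div₀ (by positivity) (by exact_mod_cast hwide) (by exact_mod_cast hpos)
    (by exact_mod_cast hnarrow)
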